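/- Let A, B, C, D be bounded linear operators on H and t ∈ [0,1]. For the block operator T = (A B; C D) on H ⊕ H one has ‖T‖_{t-ber} ≤ ‖M‖, where M is the 2×2 real matrix with entries M₁₁ = ‖A‖_{t-ber}, M₁₂ = t‖B‖_ber + (1−t)‖C‖_ber, M₂₁ = t‖C‖_ber + (1−t)‖B‖_ber, M₂₂ = ‖D‖_{t-ber}, and ‖M‖ is its operator norm as a linear map on the 2-dimensional Euclidean space; the t-Berezin norm of T is taken with respect to the family of unit vectors of H ⊕ H of the form (c₁ k_{λ₁}, c₂ k_{λ₂}) with λ₁, λ₂ ∈ Ω and |c₁|² + |c₂|² = 1. -/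

import Mathlib

open ContinuousLinearMap
open scoped InnerProductSpace

/-- The `t`-Berezin norm of `A` with respect to the family `k` of (normalized reproducing
kernel) vectors. -/
noncomputable def tber {E : Type*} [NormedAddCommGroup E] [InnerProductSpace ℂ E]
    [CompleteSpace E] {ι : Type*} (k : ι → E) (t : ℝ) (A : E →L[ℂ] E) : ℝ :=
  ⨆ p : ι × ι, (t * ‖⟪A (k p.1), k p.2⟫_ℂ‖ + (1 - t) * ‖⟪adjoint A (k p.1), k p.2⟫_ℂ‖)

/-- The Berezin norm of `A` with respect to the family `k`. -/
noncomputable def berNorm {E : Type*} [NormedAddCommGroup E] [InnerProductSpace ℂ E]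
    {ι : Type*} (k : ι → E) (A : E →L[ℂ] E) : ℝ :=
  ⨆ p : ι × ι, ‖⟪A (k p.1), k p.2⟫_ℂ‖

/-- The Berezin number of `A` with respect to the family `k`. -/
noncomputable def berNum {E : Type*} [NormedAddCommGroup E] [InnerProductSpace ℂ E]
    {ι : Type*} (k : ι → E) (A : E →L[ℂ] E) : ℝ :=
  ⨆ l : ι, ‖⟪A (k l), k l⟫_ℂ‖

/-- The modulus `|A| = (A*A)^(1/2)` of an operator, via the continuous functional calculus. -/
noncomputable def absOp {H : Type*} [NormedAddCommGroup H] [InnerProductSpace ℂ H]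
    [CompleteSpace H] (A : H →L[ℂ] H) : H →L[ℂ] H :=
  cfc Real.sqrt (adjoint A * A)

/-- Real powers of a (positive) operator via the continuous functional calculus. -/
noncomputable def rpowOp {H : Type*} [NormedAddCommGroup H] [InnerProductSpace ℂ H]
    [CompleteSpace H] (A : H →L[ℂ] H) (r : ℝ) : H →L[ℂ] H :=
  cfc (fun x : ℝ => x ^ r) A

/-- The family of unit vectors `(c₁ k_{λ₁}, c₂ k_{λ₂})` of `H ⊕ H` (realized as `WithLp 2 (H × H)`)
indexed by pairs of kernel indices and pairs of scalars with `|c₁|² + |c₂|² = 1`. -/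
noncomputable def K2 {H : Type*} [NormedAddCommGroup H] [InnerProductSpace ℂ H]
    {Ω : Type*} (k : Ω → H) :
    {q : (Ω × Ω) × ℂ × ℂ // ‖q.2.1‖ ^ 2 + ‖q.2.2‖ ^ 2 = 1} → WithLp 2 (H × H) :=
  fun q => (WithLp.equiv 2 (H × H)).symm (q.1.2.1 • k q.1.1.1, q.1.2.2 • k q.1.1.2)

lemma euclid_aux (M : Matrix (Fin 2) (Fin 2) ℝ) (v0 v1 w0 w1 : ℝ)
    (hv : v0 ^ 2 + v1 ^ 2 = 1) (hw : w0 ^ 2 + w1 ^ 2 = 1) :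
    v0 * (M 0 0 * w0 + M 0 1 * w1) + v1 * (M 1 0 * w0 + M 1 1 * w1) ≤
      ‖Matrix.toEuclideanCLM (𝕜 := ℝ) M‖ := by
  set v : EuclideanSpace ℝ (Fin 2) := (WithLp.equiv 2 _).symm ![v0, v1]
  set w : EuclideanSpace ℝ (Fin 2) := (WithLp.equiv 2 _).symm ![w0, w1]
  have hvn : ‖v‖ = 1 := by
    rw [EuclideanSpace.norm_eq]
    simp [v, Fin.sum_univ_two]
    rw [show v0 ^ 2 + v1 ^ 2 = 1 from hv]
  have hwn : ‖w‖ = 1 := by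
    rw [EuclideanSpace.norm_eq]
    simp [w, Fin.sum_univ_two]
    rw [show w0 ^ 2 + w1 ^ 2 = 1 from hw]
  have key : v0 * (M 0 0 * w0 + M 0 1 * w1) + v1 * (M 1 0 * w0 + M 1 1 * w1)
      = ⟪v, Matrix.toEuclideanCLM (𝕜 := ℝ) M w⟫_ℝ := by
    rw [show w = (WithLp.equiv 2 _).symm ![w0, w1] from rfl,
      WithLp.equiv_symm_apply, Matrix.toEuclideanCLM_toLp]
    simp [PiLp.inner_apply, Fin.sum_univ_two, v, Matrix.mulVec, dotProduct]
    try ring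
  rw [key]
  calc ⟪v, Matrix.toEuclideanCLM (𝕜 := ℝ) M w⟫_ℝ
      ≤ ‖v‖ * ‖Matrix.toEuclideanCLM (𝕜 := ℝ) M w‖ := real_inner_le_norm _ _
    _ ≤ ‖v‖ * (‖Matrix.toEuclideanCLM (𝕜 := ℝ) M‖ * ‖w‖) := by
        gcongr; exact le_opNorm _ _
    _ = ‖Matrix.toEuclideanCLM (𝕜 := ℝ) M‖ := by rw [hvn, hwn]; ring

lemma inner_le_berNorm {E : Type*} [NormedAddCommGroup E] [InnerProductSpace ℂ E]
    {ι : Type*} (k : ι → E) (hk : ∀ l, ‖k l‖ = 1) (A : E →L[ℂ] E) (l m : ι) :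
    ‖⟪A (k l), k m⟫_ℂ‖ ≤ berNorm k A := by
  refine le_ciSup_of_le ⟨‖A‖, ?_⟩ (l, m) le_rfl
  rintro x ⟨p, rfl⟩
  calc ‖⟪A (k p.1), k p.2⟫_ℂ‖ ≤ ‖A (k p.1)‖ * ‖k p.2‖ := norm_inner_le_norm _ _
    _ ≤ (‖A‖ * ‖k p.1‖) * ‖k p.2‖ := by gcongr; exact le_opNorm _ _
    _ = ‖A‖ := by rw [hk, hk]; ring

lemma inner_le_tber {E : Type*} [NormedAddCommGroup E] [InnerProductSpace ℂ E]
    [CompleteSpace E] {ι : Type*} (k : ι → E) (hk : ∀ l, ‖k l‖ = 1)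
    {t : ℝ} (ht0 : 0 ≤ t) (ht1 : t ≤ 1) (A : E →L[ℂ] E) (l m : ι) :
    t * ‖⟪A (k l), k m⟫_ℂ‖ + (1 - t) * ‖⟪adjoint A (k l), k m⟫_ℂ‖ ≤ tber k t A := by
  have bdd : ∀ (B : E →L[ℂ] E) (l m : ι), ‖⟪B (k l), k m⟫_ℂ‖ ≤ ‖B‖ := by
    intro B l m
    calc ‖⟪B (k l), k m⟫_ℂ‖ ≤ ‖B (k l)‖ * ‖k m‖ := norm_inner_le_norm _ _
      _ ≤ (‖B‖ * ‖k l‖) * ‖k m‖ := by gcongr; exact le_opNorm _ _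
      _ = ‖B‖ := by rw [hk, hk]; ring
  refine le_ciSup_of_le ⟨‖A‖, ?_⟩ (l, m) le_rfl
  rintro x ⟨p, rfl⟩
  have h1 := bdd A p.1 p.2
  have h2 := bdd (adjoint A) p.1 p.2
  rw [adjoint.norm_map] at h2
  show t * ‖⟪A (k p.1), k p.2⟫_ℂ‖ + (1 - t) * ‖⟪adjoint A (k p.1), k p.2⟫_ℂ‖ ≤ ‖A‖
  nlinarith [mul_le_mul_of_nonneg_left h1 ht0,
    mul_le_mul_of_nonneg_left h2 (by linarith : (0:ℝ) ≤ 1 - t)]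

lemma norm_four_aux (z1 z2 z3 z4 c1 c2 d1 d2 : ℂ) :
    ‖(starRingEnd ℂ) c1 * d1 * z1 + (starRingEnd ℂ) c2 * d1 * z2
      + (starRingEnd ℂ) c1 * d2 * z3 + (starRingEnd ℂ) c2 * d2 * z4‖ ≤
    ‖c1‖ * ‖d1‖ * ‖z1‖ + ‖c2‖ * ‖d1‖ * ‖z2‖ + ‖c1‖ * ‖d2‖ * ‖z3‖ + ‖c2‖ * ‖d2‖ * ‖z4‖ := by
  refine le_trans (norm_add_le _ _) (le_trans (add_le_add_left (norm_add_le _ _) _)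
    (le_trans (add_le_add_left (add_le_add_left (norm_add_le _ _) _) _) ?_))
  simp only [norm_mul, RCLike.norm_conj]
  apply le_of_eq; ring

theorem stmt11 {H : Type*} [NormedAddCommGroup H] [InnerProductSpace ℂ H] [CompleteSpace H]
    {Ω : Type*} [Nonempty Ω] (k : Ω → H) (hk : ∀ l, ‖k l‖ = 1)
    (t : ℝ) (ht : t ∈ Set.Icc (0 : ℝ) 1) (A B C D : H →L[ℂ] H)
    (T : WithLp 2 (H × H) →L[ℂ] WithLp 2 (H × H))
    (hT : ∀ x y : H, T ((WithLp.equiv 2 (H × H)).symm (x, y)) =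
      (WithLp.equiv 2 (H × H)).symm (A x + B y, C x + D y)) :
    tber (K2 k) t T ≤
      ‖Matrix.toEuclideanCLM (𝕜 := ℝ)
        !![tber k t A, t * berNorm k B + (1 - t) * berNorm k C;
           t * berNorm k C + (1 - t) * berNorm k B, tber k t D]‖ := by
  obtain ⟨ht0, ht1⟩ := ht
  set M : Matrix (Fin 2) (Fin 2) ℝ :=
    !![tber k t A, t * berNorm k B + (1 - t) * berNorm k C;
       t * berNorm k C + (1 - t) * berNorm k B, tber k t D] with hM
  have hM00 : M 0 0 = tber k t A := by simp [hM]
  have hM01 : M 0 1 = t * berNorm k B + (1 - t) * berNorm k C := by simp [hM]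
  have hM10 : M 1 0 = t * berNorm k C + (1 - t) * berNorm k B := by simp [hM]
  have hM11 : M 1 1 = tber k t D := by simp [hM]
  have key : ∀ (l1 l2 m1 m2 : Ω) (c1 c2 d1 d2 : ℂ),
      ⟪T ((WithLp.equiv 2 (H × H)).symm (c1 • k l1, c2 • k l2)),
        (WithLp.equiv 2 (H × H)).symm (d1 • k m1, d2 • k m2)⟫_ℂ =
      (starRingEnd ℂ) c1 * d1 * ⟪A (k l1), k m1⟫_ℂ
      + (starRingEnd ℂ) c2 * d1 * ⟪B (k l2), k m1⟫_ℂ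
      + (starRingEnd ℂ) c1 * d2 * ⟪C (k l1), k m2⟫_ℂ
      + (starRingEnd ℂ) c2 * d2 * ⟪D (k l2), k m2⟫_ℂ := by
    intro l1 l2 m1 m2 c1 c2 d1 d2
    rw [hT]
    simp [WithLp.prod_inner_apply, inner_add_left, inner_add_right,
      inner_smul_left, inner_smul_right]
    ring
  haveI : Nonempty {q : (Ω × Ω) × ℂ × ℂ // ‖q.2.1‖ ^ 2 + ‖q.2.2‖ ^ 2 = 1} :=
    ⟨⟨((Classical.arbitrary Ω, Classical.arbitrary Ω), (1, 0)), by norm_num⟩⟩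
  apply ciSup_le
  rintro ⟨⟨⟨⟨l1, l2⟩, c1, c2⟩, hq⟩, ⟨⟨⟨m1, m2⟩, d1, d2⟩, hp⟩⟩
  show t * ‖⟪T ((WithLp.equiv 2 (H × H)).symm (c1 • k l1, c2 • k l2)),
        (WithLp.equiv 2 (H × H)).symm (d1 • k m1, d2 • k m2)⟫_ℂ‖
      + (1 - t) * ‖⟪adjoint T ((WithLp.equiv 2 (H × H)).symm (c1 • k l1, c2 • k l2)),
        (WithLp.equiv 2 (H × H)).symm (d1 • k m1, d2 • k m2)⟫_ℂ‖ ≤ _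
  -- bound on the T part
  have h1 : ‖⟪T ((WithLp.equiv 2 (H × H)).symm (c1 • k l1, c2 • k l2)),
        (WithLp.equiv 2 (H × H)).symm (d1 • k m1, d2 • k m2)⟫_ℂ‖ ≤
      ‖c1‖ * ‖d1‖ * ‖⟪A (k l1), k m1⟫_ℂ‖ + ‖c2‖ * ‖d1‖ * ‖⟪B (k l2), k m1⟫_ℂ‖
      + ‖c1‖ * ‖d2‖ * ‖⟪C (k l1), k m2⟫_ℂ‖ + ‖c2‖ * ‖d2‖ * ‖⟪D (k l2), k m2⟫_ℂ‖ := by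
    rw [key]; exact norm_four_aux _ _ _ _ _ _ _ _
  -- bound on the adjoint part
  have h2 : ‖⟪adjoint T ((WithLp.equiv 2 (H × H)).symm (c1 • k l1, c2 • k l2)),
        (WithLp.equiv 2 (H × H)).symm (d1 • k m1, d2 • k m2)⟫_ℂ‖ ≤
      ‖d1‖ * ‖c1‖ * ‖⟪adjoint A (k l1), k m1⟫_ℂ‖ + ‖d2‖ * ‖c1‖ * ‖⟪B (k m2), k l1⟫_ℂ‖
      + ‖d1‖ * ‖c2‖ * ‖⟪C (k m1), k l2⟫_ℂ‖ + ‖d2‖ * ‖c2‖ * ‖⟪adjoint D (k l2), k m2⟫_ℂ‖ := by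
    rw [adjoint_inner_left, ← norm_inner_symm, key]
    have e1 : ‖⟪A (k m1), k l1⟫_ℂ‖ = ‖⟪adjoint A (k l1), k m1⟫_ℂ‖ := by
      rw [adjoint_inner_left, norm_inner_symm]
    have e2 : ‖⟪D (k m2), k l2⟫_ℂ‖ = ‖⟪adjoint D (k l2), k m2⟫_ℂ‖ := by
      rw [adjoint_inner_left, norm_inner_symm]
    calc ‖(starRingEnd ℂ) d1 * c1 * ⟪A (k m1), k l1⟫_ℂ
        + (starRingEnd ℂ) d2 * c1 * ⟪B (k m2), k l1⟫_ℂ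
        + (starRingEnd ℂ) d1 * c2 * ⟪C (k m1), k l2⟫_ℂ
        + (starRingEnd ℂ) d2 * c2 * ⟪D (k m2), k l2⟫_ℂ‖ ≤
        ‖d1‖ * ‖c1‖ * ‖⟪A (k m1), k l1⟫_ℂ‖ + ‖d2‖ * ‖c1‖ * ‖⟪B (k m2), k l1⟫_ℂ‖
        + ‖d1‖ * ‖c2‖ * ‖⟪C (k m1), k l2⟫_ℂ‖ + ‖d2‖ * ‖c2‖ * ‖⟪D (k m2), k l2⟫_ℂ‖ :=
        norm_four_aux _ _ _ _ _ _ _ _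
      _ = _ := by rw [e1, e2]
  have step : t * (‖c1‖ * ‖d1‖ * ‖⟪A (k l1), k m1⟫_ℂ‖ + ‖c2‖ * ‖d1‖ * ‖⟪B (k l2), k m1⟫_ℂ‖
      + ‖c1‖ * ‖d2‖ * ‖⟪C (k l1), k m2⟫_ℂ‖ + ‖c2‖ * ‖d2‖ * ‖⟪D (k l2), k m2⟫_ℂ‖)
      + (1 - t) * (‖d1‖ * ‖c1‖ * ‖⟪adjoint A (k l1), k m1⟫_ℂ‖
      + ‖d2‖ * ‖c1‖ * ‖⟪B (k m2), k l1⟫_ℂ‖ + ‖d1‖ * ‖c2‖ * ‖⟪C (k m1), k l2⟫_ℂ‖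
      + ‖d2‖ * ‖c2‖ * ‖⟪adjoint D (k l2), k m2⟫_ℂ‖)
      ≤ ‖d1‖ * (M 0 0 * ‖c1‖ + M 0 1 * ‖c2‖) + ‖d2‖ * (M 1 0 * ‖c1‖ + M 1 1 * ‖c2‖) := by
    have bA := inner_le_tber k hk ht0 ht1 A l1 m1
    have bD := inner_le_tber k hk ht0 ht1 D l2 m2
    have bB1 := inner_le_berNorm k hk B l2 m1
    have bB2 := inner_le_berNorm k hk B m2 l1
    have bC1 := inner_le_berNorm k hk C l1 m2
    have bC2 := inner_le_berNorm k hk C m1 l2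
    rw [hM00, hM01, hM10, hM11]
    have e : t * (‖c1‖ * ‖d1‖ * ‖⟪A (k l1), k m1⟫_ℂ‖ + ‖c2‖ * ‖d1‖ * ‖⟪B (k l2), k m1⟫_ℂ‖
        + ‖c1‖ * ‖d2‖ * ‖⟪C (k l1), k m2⟫_ℂ‖ + ‖c2‖ * ‖d2‖ * ‖⟪D (k l2), k m2⟫_ℂ‖)
        + (1 - t) * (‖d1‖ * ‖c1‖ * ‖⟪adjoint A (k l1), k m1⟫_ℂ‖
        + ‖d2‖ * ‖c1‖ * ‖⟪B (k m2), k l1⟫_ℂ‖ + ‖d1‖ * ‖c2‖ * ‖⟪C (k m1), k l2⟫_ℂ‖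
        + ‖d2‖ * ‖c2‖ * ‖⟪adjoint D (k l2), k m2⟫_ℂ‖)
        = ‖d1‖ * ‖c1‖ * (t * ‖⟪A (k l1), k m1⟫_ℂ‖ + (1 - t) * ‖⟪adjoint A (k l1), k m1⟫_ℂ‖)
        + ‖d1‖ * ‖c2‖ * (t * ‖⟪B (k l2), k m1⟫_ℂ‖ + (1 - t) * ‖⟪C (k m1), k l2⟫_ℂ‖)
        + ‖d2‖ * ‖c1‖ * (t * ‖⟪C (k l1), k m2⟫_ℂ‖ + (1 - t) * ‖⟪B (k m2), k l1⟫_ℂ‖)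
        + ‖d2‖ * ‖c2‖ * (t * ‖⟪D (k l2), k m2⟫_ℂ‖ + (1 - t) * ‖⟪adjoint D (k l2), k m2⟫_ℂ‖) := by
      ring
    rw [e]
    have g1 : t * ‖⟪B (k l2), k m1⟫_ℂ‖ + (1 - t) * ‖⟪C (k m1), k l2⟫_ℂ‖
        ≤ t * berNorm k B + (1 - t) * berNorm k C := by
      gcongr <;> linarith
    have g2 : t * ‖⟪C (k l1), k m2⟫_ℂ‖ + (1 - t) * ‖⟪B (k m2), k l1⟫_ℂ‖
        ≤ t * berNorm k C + (1 - t) * berNorm k B := by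
      gcongr <;> linarith
    calc _ ≤ ‖d1‖ * ‖c1‖ * tber k t A
        + ‖d1‖ * ‖c2‖ * (t * berNorm k B + (1 - t) * berNorm k C)
        + ‖d2‖ * ‖c1‖ * (t * berNorm k C + (1 - t) * berNorm k B)
        + ‖d2‖ * ‖c2‖ * tber k t D := by
          gcongr <;> positivity
      _ = _ := by ring
  calc t * ‖⟪T ((WithLp.equiv 2 (H × H)).symm (c1 • k l1, c2 • k l2)),
        (WithLp.equiv 2 (H × H)).symm (d1 • k m1, d2 • k m2)⟫_ℂ‖
      + (1 - t) * ‖⟪adjoint T ((WithLp.equiv 2 (H × H)).symm (c1 • k l1, c2 • k l2)),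
        (WithLp.equiv 2 (H × H)).symm (d1 • k m1, d2 • k m2)⟫_ℂ‖
      ≤ ‖d1‖ * (M 0 0 * ‖c1‖ + M 0 1 * ‖c2‖) + ‖d2‖ * (M 1 0 * ‖c1‖ + M 1 1 * ‖c2‖) := by
        refine le_trans (add_le_add (mul_le_mul_of_nonneg_left h1 ht0)
          (mul_le_mul_of_nonneg_left h2 (by linarith))) step
    _ ≤ ‖Matrix.toEuclideanCLM (𝕜 := ℝ) M‖ := euclid_aux M _ _ _ _ hp hq
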